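/- arXiv:1002.2876 — 2 statements merged into one kernel-verified Lean document; each statement's English description precedes it below -/
import Mathlib

section
/- Let 1 ≤ p < ∞ and let N be a positive integer. Define scalar functions on [0,1) by θ_j = 2^{(N−j−1)/p} 1_{[0,2^{−N})} for 0 ≤ j ≤ N−1 and θ_j = 0 for all other j. Then θ = (θ_j) is a p-Carleson family with respect to the dyadic filtration on [0,1), and ‖θ‖_{Car^p} ≤ C_p for a constant C_p depending only on p (in particular independent of N): for every m ≥ 0 and every A ∈ 𝒟_m, ∫_A 𝔼|∑_{j≥m} ε_j θ_j(ξ)|^p dξ ≤ C_p^p |A|. -/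
open MeasureTheory ENNReal Set
open scoped ZeroAtInfty

noncomputable section

/-- The `p`-th Rademacher moment `𝔼‖∑_{j ∈ s} ε_j x_j‖^p` of a finite family of vectors,
computed as the average over all choices of signs. -/
def radMoment {ι : Type*} (p : ℝ) {E : Type*} [NormedAddCommGroup E] [NormedSpace ℝ E]
    (x : ι → E) (s : Finset ι) : ℝ :=
  letI : DecidableEq ι := Classical.decEq ι
  (∑ ε : { a // a ∈ s } → Bool,
      ‖∑ j : { a // a ∈ s }, (if ε j then (1 : ℝ) else -1) • x j.1‖ ^ p) / 2 ^ s.card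

/-- The `p`-th Rademacher moment `𝔼‖∑_{j ∈ S} ε_j x_j‖^p` of a (possibly infinite) family,
defined as the supremum of the moments over finite subfamilies (the finite moments increase
along inclusion of index sets, so this agrees with the limit when the series converges). -/
def radMomentSet {ι : Type*} (p : ℝ) {E : Type*} [NormedAddCommGroup E] [NormedSpace ℝ E]
    (x : ι → E) (S : Set ι) : ℝ :=
  ⨆ s : { s : Finset ι // ↑s ⊆ S }, radMoment p x s.1

/-- `(x_j)_{j ∈ S} ∈ Rad(E)`: the Rademacher series `∑_{j ∈ S} ε_j x_j` converges in `L²`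
(unconditional Cauchy criterion for the net of finite partial sums). -/
def MemRad {ι : Type*} {E : Type*} [NormedAddCommGroup E] [NormedSpace ℝ E]
    (x : ι → E) (S : Set ι) : Prop :=
  ∀ δ : ℝ, 0 < δ → ∃ s₀ : Finset ι, ↑s₀ ⊆ S ∧
    ∀ s : Finset ι, ↑s ⊆ S → Disjoint s s₀ → radMoment 2 x s < δ

/-- `E` has type `r` with constant `C`:
`(𝔼‖∑ ε_j x_j‖²)^{1/2} ≤ C (∑ ‖x_j‖^r)^{1/r}`. -/
def HasTypeWith (r C : ℝ) (E : Type*) [NormedAddCommGroup E] [NormedSpace ℝ E] : Prop :=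
  ∀ (N : ℕ) (x : Fin N → E),
    radMoment 2 x Finset.univ ^ (1 / 2 : ℝ) ≤ C * (∑ j, ‖x j‖ ^ r) ^ (1 / r)

/-- `E` has type `r`. -/
def HasType (r : ℝ) (E : Type*) [NormedAddCommGroup E] [NormedSpace ℝ E] : Prop :=
  ∃ C : ℝ, HasTypeWith r C E

/-- The family `T` of operators is `R`-bounded, with respect to `s`-th Rademacher moments,
with constant `C`:  `𝔼‖∑ ε_j T_j x_j‖^s ≤ C^s 𝔼‖∑ ε_j x_j‖^s`. -/
def RBoundedWith (s C : ℝ) {F E : Type*} [NormedAddCommGroup F] [NormedSpace ℝ F]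
    [NormedAddCommGroup E] [NormedSpace ℝ E] (T : Set (F →L[ℝ] E)) : Prop :=
  ∀ (N : ℕ) (Tf : Fin N → F →L[ℝ] E) (x : Fin N → F), (∀ j, Tf j ∈ T) →
    radMoment s (fun j => Tf j (x j)) Finset.univ ≤ C ^ s * radMoment s x Finset.univ

/-- `ℛ_s(T)`, the least `R`-boundedness constant of the family `T` (`∞` if `T` is not
`R`-bounded). -/
def Rbound (s : ℝ) {F E : Type*} [NormedAddCommGroup F] [NormedSpace ℝ F]
    [NormedAddCommGroup E] [NormedSpace ℝ E] (T : Set (F →L[ℝ] E)) : ℝ≥0∞ :=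
  sInf {C : ℝ≥0∞ | ∃ C₀ : ℝ, 0 ≤ C₀ ∧ C = ENNReal.ofReal C₀ ∧ RBoundedWith s C₀ T}

/-- `E` contains an isomorphic copy of `c₀`: an injective bounded linear map from
`c₀ = C₀(ℕ, ℝ)` into `E` which is bounded below. -/
def ContainsIsoC0 (E : Type*) [NormedAddCommGroup E] [NormedSpace ℝ E] : Prop :=
  ∃ T : C₀(ℕ, ℝ) →L[ℝ] E, Function.Injective T ∧ ∃ c : ℝ, 0 < c ∧ ∀ a, c * ‖a‖ ≤ ‖T a‖

/-- `𝒳` is a Banach space of operators inside `L(F,E)`: the (injective) inclusion map is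
linear, the `𝒳`-norm dominates the operator norm, and `𝒳` contains all elementary tensors
`f* ⊗ e` with `‖f* ⊗ e‖_𝒳 = ‖f*‖ ‖e‖`. -/
structure OperatorSpaceIn (𝒳 F E : Type*) [NormedAddCommGroup 𝒳] [NormedSpace ℝ 𝒳]
    [NormedAddCommGroup F] [NormedSpace ℝ F] [NormedAddCommGroup E] [NormedSpace ℝ E] where
  ι : 𝒳 →ₗ[ℝ] (F →L[ℝ] E)
  inj : Function.Injective ι
  norm_le : ∀ x : 𝒳, ‖ι x‖ ≤ ‖x‖
  tensor : ∀ (φ : F →L[ℝ] ℝ) (e : E), ∃ x : 𝒳, ι x = φ.smulRight e ∧ ‖x‖ = ‖φ‖ * ‖e‖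

/-- `g` is (a version of) the conditional expectation of `f` with respect to the
sub-σ-algebra `m`: `g` is strongly `m`-measurable and has the same integral as `f` on every
`m`-measurable set of finite measure. -/
def IsCondExpOf {Ω X : Type*} [mΩ : MeasurableSpace Ω] [NormedAddCommGroup X]
    [NormedSpace ℝ X] (m : MeasurableSpace Ω) (μ : @Measure Ω mΩ) (f g : Ω → X) : Prop :=
  StronglyMeasurable[m] g ∧
    ∀ A : Set Ω, MeasurableSet[m] A → μ A < ⊤ →
      ∫ ξ in A, g ξ ∂μ = ∫ ξ in A, f ξ ∂μ

/-- `(𝔽_j)_{j ∈ ℤ}` is a filtration of sub-σ-algebras on `(Ω, μ)`, each of which is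
σ-finite for `μ`. -/
def IsFiltrationOn {Ω : Type*} [m0 : MeasurableSpace Ω] (μ : Measure Ω)
    (𝔽 : ℤ → MeasurableSpace Ω) : Prop :=
  Monotone 𝔽 ∧ (∀ j, 𝔽 j ≤ m0) ∧ ∀ (j : ℤ) (h : 𝔽 j ≤ m0), SigmaFinite (μ.trim h)

/-- `θ = (θ_j)_{j ∈ ℤ}` is a `p`-Carleson family with constant `C` for the filtration `𝔽`
on `(Ω, μ)`: the `θ_j` are strongly measurable, `(θ_j(ξ))_{j ≥ m} ∈ Rad(F)` for all `m` and
a.e. `ξ`, and `∫_A 𝔼‖∑_{j ≥ m} ε_j θ_j(ξ)‖^p dμ(ξ) ≤ C^p μ(A)` for every `m ∈ ℤ` and every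
`A ∈ 𝔽_m`. -/
def IsCarlesonFamily {Ω : Type*} [MeasurableSpace Ω] {F : Type*} [NormedAddCommGroup F]
    [NormedSpace ℝ F] (μ : Measure Ω) (𝔽 : ℤ → MeasurableSpace Ω) (p : ℝ)
    (θ : ℤ → Ω → F) (C : ℝ≥0∞) : Prop :=
  (∀ j, AEStronglyMeasurable (θ j) μ) ∧
  (∀ m : ℤ, ∀ᵐ ξ ∂μ, MemRad (fun j => θ j ξ) {j : ℤ | m ≤ j}) ∧
  ∀ (m : ℤ) (A : Set Ω), MeasurableSet[𝔽 m] A →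
    ∫⁻ ξ in A, ENNReal.ofReal (radMomentSet p (fun j => θ j ξ) {j : ℤ | m ≤ j}) ∂μ
      ≤ C ^ p * μ A

/-- The `m`-th dyadic σ-algebra on `ℝ`, generated by the dyadic intervals of length `2^{-m}`. -/
def dyadicSigma (m : ℤ) : MeasurableSpace ℝ :=
  MeasurableSpace.generateFrom
    {I : Set ℝ | ∃ k : ℤ, I = Set.Ico ((k : ℝ) / 2 ^ m) ((k + 1 : ℝ) / 2 ^ m)}

/-- The average `E_j f(ξ)` of `f` over the dyadic interval of length `2^{-j}` containing `ξ`. -/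
def dyadicAvg {E : Type*} [NormedAddCommGroup E] [NormedSpace ℝ E]
    (f : ℝ → E) (j : ℤ) (ξ : ℝ) : E :=
  (2 : ℝ) ^ j • ∫ t in Set.Ico ((⌊ξ * 2 ^ j⌋ : ℝ) / 2 ^ j) ((⌊ξ * 2 ^ j⌋ + 1 : ℝ) / 2 ^ j), f t

/-- The RMF property of a space `𝒳` of operators embedded in `L(F,E)` by `ι`: the
Rademacher maximal operator `M_R f(ξ) = ℛ({E_j f(ξ) : j ≥ 0})` associated with the dyadic
filtration of `[0,1)` is bounded from `L^p([0,1); 𝒳)` to `L^p([0,1))` for some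
`p ∈ (1,∞)`. -/
def HasRMFgen {𝒳 F E : Type*} [NormedAddCommGroup 𝒳] [NormedSpace ℝ 𝒳]
    [NormedAddCommGroup F] [NormedSpace ℝ F] [NormedAddCommGroup E] [NormedSpace ℝ E]
    (ι : 𝒳 → (F →L[ℝ] E)) : Prop :=
  ∃ p : ℝ, 1 < p ∧ ∃ C : ℝ≥0∞, C ≠ ⊤ ∧
    ∀ f : ℝ → 𝒳, MemLp f (ENNReal.ofReal p) (volume.restrict (Set.Ico (0 : ℝ) 1)) →
      ∫⁻ ξ in Set.Ico (0 : ℝ) 1,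
          Rbound 2 {T | ∃ j : ℕ, T = ι (dyadicAvg f (j : ℤ) ξ)} ^ p
        ≤ C * ∫⁻ ξ in Set.Ico (0 : ℝ) 1, (‖f ξ‖₊ : ℝ≥0∞) ^ p

/-- The RMF property of the operator space `𝒳 ⊆ L(F,E)`. -/
def HasRMF {𝒳 F E : Type*} [NormedAddCommGroup 𝒳] [NormedSpace ℝ 𝒳]
    [NormedAddCommGroup F] [NormedSpace ℝ F] [NormedAddCommGroup E] [NormedSpace ℝ E]
    (emb : OperatorSpaceIn 𝒳 F E) : Prop :=
  HasRMFgen fun x : 𝒳 => emb.ι x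

/-- The `(q,p)`-Carleson map for the filtration `𝔽` on `(Ω,μ)` is well-defined and bounded
with constant `C`: for every `q`-Carleson family `θ` (with constant `Cθ`) and every
`f ∈ L^p(Ω;𝒳)` with conditional expectations `E_j f`, the sequence
`Θf(ξ) = (E_j f(ξ) θ_j(ξ))_{j∈ℤ}` lies in `Rad(E)` a.e. and
`‖Θf‖_{L^p(Rad(E))} ≤ C ‖θ‖_{Car^q} ‖f‖_{L^p(𝒳)}`. -/
def CarlesonEmbedding {𝒳 F E : Type*} [NormedAddCommGroup 𝒳] [NormedSpace ℝ 𝒳]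
    [NormedAddCommGroup F] [NormedSpace ℝ F] [NormedAddCommGroup E] [NormedSpace ℝ E]
    (emb : OperatorSpaceIn 𝒳 F E) (q p : ℝ) {Ω : Type*} [MeasurableSpace Ω]
    (μ : Measure Ω) (𝔽 : ℤ → MeasurableSpace Ω) (C : ℝ≥0∞) : Prop :=
  ∀ (θ : ℤ → Ω → F) (Cθ : ℝ≥0∞), IsCarlesonFamily μ 𝔽 q θ Cθ →
    ∀ (f : Ω → 𝒳) (Ef : ℤ → Ω → 𝒳),
      MemLp f (ENNReal.ofReal p) μ → (∀ j, IsCondExpOf (𝔽 j) μ f (Ef j)) →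
      (∀ᵐ ξ ∂μ, MemRad (fun j : ℤ => emb.ι (Ef j ξ) (θ j ξ)) Set.univ) ∧
      (∫⁻ ξ, ENNReal.ofReal
            (radMomentSet p (fun j : ℤ => emb.ι (Ef j ξ) (θ j ξ)) Set.univ) ∂μ) ^ (1 / p)
        ≤ C * Cθ * (∫⁻ ξ, (‖f ξ‖₊ : ℝ≥0∞) ^ p ∂μ) ^ (1 / p)

/-- The Lorentz `L^{p,s}` (quasi-)norm of an `ℝ≥0∞`-valued function:
`‖g‖_{L^{p,s}} = (∫_0^∞ (λ μ({g > λ})^{1/p})^s dλ/λ)^{1/s}`. -/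
def lorentzNorm {Ω : Type*} [MeasurableSpace Ω] (μ : Measure Ω) (p s : ℝ)
    (g : Ω → ℝ≥0∞) : ℝ≥0∞ :=
  (∫⁻ t in Set.Ioi (0 : ℝ),
      (ENNReal.ofReal t * μ {ξ | ENNReal.ofReal t < g ξ} ^ (1 / p)) ^ s
        / ENNReal.ofReal t) ^ (1 / s)

/-! By the triangle inequality, `𝔼|∑_{j ≥ m} ε_j θ_j(ξ)|^p` is at most
`(∑_{max m 0 ≤ j < N} 2^{(N-j-1)/p})^p ≤ C_p^p 2^{N - max m 0}` with `C_p = (2^{1/p} - 1)⁻¹`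
(a geometric series) for `ξ ∈ [0, 2^{-N})`, and vanishes elsewhere. A set `A ∈ 𝒟_m` with
`m < N` either contains the atom `[0, 2^{-m})`, so that `|A ∩ [0,1)| ≥ 2^{-max m 0}` pays for
the factor `2^{N - max m 0}` on a set of measure `2^{-N}`, or misses `[0, 2^{-N})` altogether;
for `m ≥ N` every `θ_j` with `j ≥ m` vanishes. -/

theorem radMoment_le_sum_norm_rpow {ι E : Type*} [NormedAddCommGroup E] [NormedSpace ℝ E]
    {p : ℝ} (hp : 0 ≤ p) (x : ι → E) (s : Finset ι) :
    radMoment p x s ≤ (∑ j ∈ s, ‖x j‖) ^ p := by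
  classical
  have hsign : ∀ ε : s → Bool,
      ‖∑ j : s, (if ε j then (1 : ℝ) else -1) • x j.1‖ ^ p ≤ (∑ j ∈ s, ‖x j‖) ^ p := by
    intro ε
    gcongr
    calc ‖∑ j : s, (if ε j then (1 : ℝ) else -1) • x j.1‖
        ≤ ∑ j : s, ‖(if ε j then (1 : ℝ) else -1) • x j.1‖ := norm_sum_le _ _
      _ = ∑ j ∈ s, ‖x j‖ := by
        rw [← Finset.sum_coe_sort s]
        refine Finset.sum_congr rfl fun j _ => ?_
        split_ifs <;> simp
  unfold radMoment
  rw [div_le_iff₀ (by positivity)]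
  convert Finset.sum_le_card_nsmul _ _ _ fun ε _ => hsign ε using 1
  simp [mul_comm]

theorem radMomentSet_le_sum_norm_rpow {ι E : Type*} [NormedAddCommGroup E] [NormedSpace ℝ E]
    {p : ℝ} (hp : 0 ≤ p) {x : ι → E} {S : Set ι} (t : Finset ι)
    (hx : ∀ j ∈ S, j ∉ t → x j = 0) :
    radMomentSet p x S ≤ (∑ j ∈ t, ‖x j‖) ^ p := by
  classical
  have : Nonempty { s : Finset ι // ↑s ⊆ S } := ⟨⟨∅, by simp⟩⟩
  refine ciSup_le fun ⟨s, hs⟩ => (radMoment_le_sum_norm_rpow hp x s).trans ?_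
  refine Real.rpow_le_rpow (Finset.sum_nonneg fun _ _ => norm_nonneg _) ?_ hp
  calc ∑ j ∈ s, ‖x j‖ = ∑ j ∈ s ∩ t, ‖x j‖ :=
        (Finset.sum_subset Finset.inter_subset_left fun j hj hjt =>
          by simp [hx j (hs hj) fun h => hjt (Finset.mem_inter.2 ⟨hj, h⟩)]).symm
    _ ≤ ∑ j ∈ t, ‖x j‖ :=
        Finset.sum_le_sum_of_subset_of_nonneg Finset.inter_subset_right fun _ _ _ => norm_nonneg _

theorem memRad_of_eq_zero_off {ι E : Type*} [NormedAddCommGroup E] [NormedSpace ℝ E]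
    {x : ι → E} {S : Set ι} (t : Finset ι) (hx : ∀ j ∈ S, j ∉ t → x j = 0) : MemRad x S := by
  classical
  intro δ hδ
  refine ⟨t.filter (· ∈ S), fun j hj => (Finset.mem_filter.1 hj).2, fun s hs hdisj => ?_⟩
  have hvanish : ∀ j ∈ s, x j = 0 := fun j hj =>
    hx j (hs hj) fun hjt => Finset.disjoint_left.1 hdisj hj (Finset.mem_filter.2 ⟨hjt, hs hj⟩)
  calc radMoment 2 x s ≤ (∑ j ∈ s, ‖x j‖) ^ (2 : ℝ) := radMoment_le_sum_norm_rpow (by norm_num) x s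
    _ = 0 := by
      rw [Finset.sum_eq_zero fun j hj => by rw [hvanish j hj, norm_zero]]
      norm_num
    _ < δ := hδ

theorem sub_one_mul_sum_Ico_zpow (r : ℝ) (b : ℤ) (n : ℕ) :
    (r - 1) * ∑ j ∈ Finset.Ico (b - n) b, r ^ (b - 1 - j) = r ^ n - 1 := by
  induction n with
  | zero => simp
  | succ n ih =>
    rw [Nat.cast_succ, ← sub_sub, ← Finset.insert_Ico_left_eq_Ico_sub_one (by omega),
      Finset.sum_insert (by simp), mul_add, ih, show b - 1 - (b - n - 1) = n by ring, zpow_natCast]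
    ring

theorem sum_Ico_zpow_le {r : ℝ} (hr : 1 < r) (a b : ℤ) :
    ∑ j ∈ Finset.Ico a b, r ^ (b - 1 - j) ≤ r ^ (b - a) / (r - 1) := by
  have hr1 : 0 < r - 1 := by linarith
  rcases le_or_gt a b with hab | hab
  · obtain ⟨n, hn⟩ := Int.eq_ofNat_of_zero_le (sub_nonneg.2 hab)
    have ha : a = b - n := by omega
    rw [le_div_iff₀ hr1, mul_comm, ha, sub_one_mul_sum_Ico_zpow, show b - (b - n) = (n : ℤ) by ring,
      zpow_natCast]
    linarith
  · rw [Finset.Ico_eq_empty_of_le hab.le, Finset.sum_empty]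
    positivity

theorem dyadicSigma_le (m : ℤ) : dyadicSigma m ≤ Real.measurableSpace :=
  MeasurableSpace.generateFrom_le fun _ ⟨_, hI⟩ => hI ▸ measurableSet_Ico

theorem Ico_subset_or_disjoint_of_measurableSet_dyadicSigma {m : ℤ} {A : Set ℝ}
    (hA : MeasurableSet[dyadicSigma m] A) :
    Ico 0 ((2 : ℝ) ^ m)⁻¹ ⊆ A ∨ Disjoint A (Ico 0 ((2 : ℝ) ^ m)⁻¹) := by
  have h2m : (0 : ℝ) < 2 ^ m := by positivity
  induction A, hA using MeasurableSpace.generateFrom_induction with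
  | hC I hI =>
    obtain ⟨k, rfl⟩ := hI
    rcases lt_trichotomy k 0 with hk | rfl | hk
    · have hright : ((k : ℝ) + 1) / 2 ^ m ≤ 0 :=
        div_nonpos_of_nonpos_of_nonneg (by exact_mod_cast hk) h2m.le
      exact Or.inr (Set.Ico_disjoint_Ico.2
        ((min_le_left _ _).trans (hright.trans (le_max_right _ _))))
    · simp
    · have hleft : ((2 : ℝ) ^ m)⁻¹ ≤ k / 2 ^ m := by
        rw [← one_div]
        gcongr
        exact_mod_cast hk
      exact Or.inr (Set.Ico_disjoint_Ico.2
        ((min_le_right _ _).trans (hleft.trans (le_max_left _ _))))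
  | empty => exact Or.inr (Set.empty_disjoint _)
  | compl A _ ih =>
    rcases ih with h | h
    · exact Or.inr (Set.disjoint_compl_left_iff_subset.2 h)
    · exact Or.inl (Set.subset_compl_iff_disjoint_left.2 h)
  | iUnion A _ ih =>
    by_cases h : ∃ n, Ico 0 ((2 : ℝ) ^ m)⁻¹ ⊆ A n
    · obtain ⟨n, hn⟩ := h
      exact Or.inl (hn.trans (Set.subset_iUnion A n))
    · exact Or.inr (Set.disjoint_iUnion_left.2 fun n => (ih n).resolve_left fun hn => h ⟨n, hn⟩)

def bumpFamily (p : ℝ) (N : ℕ) (j : ℤ) (ξ : ℝ) : ℝ :=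
  (if 0 ≤ j ∧ j < (N : ℤ) then (2 : ℝ) ^ (((N : ℝ) - (j : ℝ) - 1) / p) else 0) *
    Set.indicator (Set.Ico (0 : ℝ) (((2 : ℝ) ^ N)⁻¹)) (fun _ => (1 : ℝ)) ξ

theorem bumpFamily_of_notMem {p : ℝ} {N : ℕ} {j : ℤ} (hj : j ∉ Finset.Ico 0 (N : ℤ)) (ξ : ℝ) :
    bumpFamily p N j ξ = 0 := by
  rw [Finset.mem_Ico] at hj
  simp [bumpFamily, hj]

theorem rpow_intCast_div_eq_zpow {x : ℝ} (hx : 0 ≤ x) (k : ℤ) (p : ℝ) :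
    x ^ ((k : ℝ) / p) = (x ^ (1 / p)) ^ k := by
  rw [← Real.rpow_intCast, ← Real.rpow_mul hx, one_div_mul_eq_div]

theorem sum_Ico_two_rpow_rpow_le {p : ℝ} (hp : 0 < p) (a b : ℤ) :
    (∑ j ∈ Finset.Ico a b, (2 : ℝ) ^ (((b : ℝ) - j - 1) / p)) ^ p
      ≤ 2 ^ (b - a) * ((2 ^ (1 / p) - 1)⁻¹) ^ p := by
  set r : ℝ := 2 ^ (1 / p)
  have hr : 1 < r := Real.one_lt_rpow one_lt_two (by positivity)
  have hpow : ∀ k : ℤ, (r ^ k) ^ p = 2 ^ k := fun k => by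
    rw [← rpow_intCast_div_eq_zpow zero_le_two, ← Real.rpow_mul zero_le_two,
      div_mul_cancel₀ _ hp.ne', Real.rpow_intCast]
  have hsum : ∑ j ∈ Finset.Ico a b, (2 : ℝ) ^ (((b : ℝ) - j - 1) / p)
      = ∑ j ∈ Finset.Ico a b, r ^ (b - 1 - j) :=
    Finset.sum_congr rfl fun j _ => by
      rw [← rpow_intCast_div_eq_zpow zero_le_two]
      push_cast
      ring_nf
  calc (∑ j ∈ Finset.Ico a b, (2 : ℝ) ^ (((b : ℝ) - j - 1) / p)) ^ p
      ≤ (r ^ (b - a) / (r - 1)) ^ p := by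
        rw [hsum]
        exact Real.rpow_le_rpow (Finset.sum_nonneg fun _ _ => by positivity)
          (sum_Ico_zpow_le hr a b) hp.le
    _ = 2 ^ (b - a) * ((r - 1)⁻¹) ^ p := by
        rw [div_eq_mul_inv, Real.mul_rpow (by positivity) (inv_nonneg.2 (by linarith)), hpow]

theorem radMomentSet_bumpFamily_le {p : ℝ} (hp : 0 < p) (N : ℕ) (m : ℤ) (ξ : ℝ) :
    radMomentSet p (fun j => bumpFamily p N j ξ) {j | m ≤ j}
      ≤ (Ico 0 ((2 : ℝ) ^ N)⁻¹).indicator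
          (fun _ => (∑ j ∈ Finset.Ico (max m 0) N, (2 : ℝ) ^ (((N : ℝ) - j - 1) / p)) ^ p) ξ := by
  by_cases hξ : ξ ∈ Ico 0 ((2 : ℝ) ^ N)⁻¹
  · rw [Set.indicator_of_mem hξ]
    refine (radMomentSet_le_sum_norm_rpow hp.le (Finset.Ico (max m 0) N) fun j hj hjt => ?_).trans
      (le_of_eq ?_)
    · refine bumpFamily_of_notMem (fun h => hjt ?_) ξ
      obtain ⟨h0j, hjN⟩ := Finset.mem_Ico.1 h
      exact Finset.mem_Ico.2 ⟨max_le hj h0j, hjN⟩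
    · refine congrArg (· ^ p) (Finset.sum_congr rfl fun j hj => ?_)
      obtain ⟨hmj, hjN⟩ := Finset.mem_Ico.1 hj
      have : 0 ≤ j ∧ j < N := ⟨(le_max_right m 0).trans hmj, hjN⟩
      simp [bumpFamily, this, Set.indicator_of_mem hξ, abs_of_pos (Real.rpow_pos_of_pos two_pos _)]
  · rw [Set.indicator_of_notMem hξ, ← Real.zero_rpow hp.ne']
    refine (radMomentSet_le_sum_norm_rpow hp.le ∅ fun j _ _ => ?_).trans (by simp)
    simp [bumpFamily, Set.indicator_of_notMem hξ]

theorem Ico_zero_inv_two_zpow_subset {a b : ℤ} (h : a ≤ b) :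
    Ico 0 ((2 : ℝ) ^ b)⁻¹ ⊆ Ico 0 ((2 : ℝ) ^ a)⁻¹ :=
  Set.Ico_subset_Ico_right (inv_anti₀ (by positivity) (zpow_le_zpow_right₀ one_le_two h))

theorem ofReal_mul_restrict_Ico_inter_le {m N : ℤ} (hmN : m < N) {A : Set ℝ}
    (hA : MeasurableSet[dyadicSigma m] A) {w c : ℝ} (hw : 0 ≤ w)
    (hwc : w * ((2 : ℝ) ^ N)⁻¹ ≤ c * ((2 : ℝ) ^ max m 0)⁻¹) :
    ENNReal.ofReal w * volume.restrict (Ico 0 1) (Ico 0 ((2 : ℝ) ^ N)⁻¹ ∩ A)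
      ≤ ENNReal.ofReal c * volume.restrict (Ico 0 1) A := by
  set μ := volume.restrict (Ico (0 : ℝ) 1)
  rcases Ico_subset_or_disjoint_of_measurableSet_dyadicSigma hA with hsub | hdisj
  · have hμIN : μ (Ico 0 ((2 : ℝ) ^ N)⁻¹ ∩ A) ≤ ENNReal.ofReal ((2 : ℝ) ^ N)⁻¹ :=
      calc μ (Ico 0 ((2 : ℝ) ^ N)⁻¹ ∩ A) ≤ volume (Ico 0 ((2 : ℝ) ^ N)⁻¹) :=
            (Measure.restrict_le_self _).trans (measure_mono inter_subset_left)
        _ = ENNReal.ofReal ((2 : ℝ) ^ N)⁻¹ := by rw [Real.volume_Ico, sub_zero]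
    have hμA : ENNReal.ofReal ((2 : ℝ) ^ max m 0)⁻¹ ≤ μ A :=
      calc ENNReal.ofReal ((2 : ℝ) ^ max m 0)⁻¹ = volume (Ico 0 ((2 : ℝ) ^ max m 0)⁻¹) := by
            rw [Real.volume_Ico, sub_zero]
        _ ≤ μ A := by
            rw [Measure.restrict_apply (dyadicSigma_le m A hA)]
            refine measure_mono (subset_inter
              ((Ico_zero_inv_two_zpow_subset (le_max_left m 0)).trans hsub) ?_)
            simpa using Ico_zero_inv_two_zpow_subset (le_max_right m 0)
    calc ENNReal.ofReal w * μ (Ico 0 ((2 : ℝ) ^ N)⁻¹ ∩ A)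
        ≤ ENNReal.ofReal w * ENNReal.ofReal ((2 : ℝ) ^ N)⁻¹ := by gcongr
      _ ≤ ENNReal.ofReal c * ENNReal.ofReal ((2 : ℝ) ^ max m 0)⁻¹ := by
          rw [← ENNReal.ofReal_mul hw, ← ENNReal.ofReal_mul' (by positivity)]
          exact ENNReal.ofReal_le_ofReal hwc
      _ ≤ ENNReal.ofReal c * μ A := by gcongr
  · have hempty : Ico 0 ((2 : ℝ) ^ N)⁻¹ ∩ A = ∅ :=
      (hdisj.symm.mono_left (Ico_zero_inv_two_zpow_subset hmN.le)).inter_eq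
    simp [hempty]

theorem setLIntegral_radMomentSet_bumpFamily_le {p : ℝ} (hp : 0 < p) (N : ℕ) {m : ℤ}
    {A : Set ℝ} (hA : MeasurableSet[dyadicSigma m] A) :
    ∫⁻ ξ in A, ENNReal.ofReal (radMomentSet p (fun j => bumpFamily p N j ξ) {j | m ≤ j})
        ∂(volume.restrict (Ico 0 1))
      ≤ ENNReal.ofReal (2 ^ (1 / p) - 1)⁻¹ ^ p * volume.restrict (Ico 0 1) A := by
  set c : ℝ := (2 ^ (1 / p) - 1)⁻¹
  set W := ∑ j ∈ Finset.Ico (max m 0) N, (2 : ℝ) ^ (((N : ℝ) - j - 1) / p)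
  have hc : 0 ≤ c := inv_nonneg.2 (sub_nonneg.2 (Real.one_le_rpow one_le_two (by positivity)))
  have hWp : 0 ≤ W ^ p := Real.rpow_nonneg (Finset.sum_nonneg fun _ _ => by positivity) p
  have hIN : MeasurableSet (Ico (0 : ℝ) ((2 : ℝ) ^ N)⁻¹) := measurableSet_Ico
  calc ∫⁻ ξ in A, ENNReal.ofReal (radMomentSet p (fun j => bumpFamily p N j ξ) {j | m ≤ j})
        ∂(volume.restrict (Ico 0 1))
      ≤ ∫⁻ ξ in A, (Ico 0 ((2 : ℝ) ^ N)⁻¹).indicator (fun _ => ENNReal.ofReal (W ^ p)) ξ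
          ∂(volume.restrict (Ico 0 1)) := by
        refine lintegral_mono fun ξ => ?_
        rw [← Function.comp_def ENNReal.ofReal, Set.indicator_comp_of_zero ENNReal.ofReal_zero]
        exact ENNReal.ofReal_le_ofReal (radMomentSet_bumpFamily_le hp N m ξ)
    _ = ENNReal.ofReal (W ^ p) * volume.restrict (Ico 0 1) (Ico 0 ((2 : ℝ) ^ N)⁻¹ ∩ A) := by
        rw [lintegral_indicator hIN, setLIntegral_const, Measure.restrict_apply hIN]
    _ ≤ ENNReal.ofReal c ^ p * volume.restrict (Ico 0 1) A := by
        rcases le_or_gt (N : ℤ) m with hNm | hmN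
        · have hW0 : W = 0 := by
            simp only [W, Finset.Ico_eq_empty_of_le (hNm.trans (le_max_left m 0)),
              Finset.sum_empty]
          simp [hW0, Real.zero_rpow hp.ne']
        rw [ENNReal.ofReal_rpow_of_nonneg hc hp.le]
        refine ofReal_mul_restrict_Ico_inter_le (N := N) hmN hA hWp ?_
        calc W ^ p * ((2 : ℝ) ^ (N : ℤ))⁻¹
            ≤ 2 ^ ((N : ℤ) - max m 0) * c ^ p * ((2 : ℝ) ^ (N : ℤ))⁻¹ := by
              have hsum := sum_Ico_two_rpow_rpow_le hp (max m 0) N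
              push_cast at hsum
              gcongr
          _ = c ^ p * ((2 : ℝ) ^ max m 0)⁻¹ := by
              rw [zpow_sub₀ two_ne_zero]
              field_simp

/-- the family `θ_j = 2^{(N-j-1)/p} 1_{[0,2^{-N})}`, `0 ≤ j ≤ N-1` (and
`θ_j = 0` otherwise), is a `p`-Carleson family for the dyadic filtration on `[0,1)` with
Carleson constant bounded independently of `N`. -/
theorem stmt9 (p : ℝ) (hp : 1 ≤ p) :
    ∃ Cp : ℝ≥0∞, Cp ≠ ⊤ ∧ ∀ N : ℕ, 0 < N →
      IsCarlesonFamily (volume.restrict (Set.Ico (0 : ℝ) 1)) dyadicSigma p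
        (fun (j : ℤ) (ξ : ℝ) =>
          (if 0 ≤ j ∧ j < (N : ℤ) then (2 : ℝ) ^ (((N : ℝ) - (j : ℝ) - 1) / p) else 0) *
            Set.indicator (Set.Ico (0 : ℝ) (((2 : ℝ) ^ N)⁻¹)) (fun _ => (1 : ℝ)) ξ)
        Cp := by
  refine ⟨ENNReal.ofReal (2 ^ (1 / p) - 1)⁻¹, ENNReal.ofReal_ne_top, fun N _ => ?_⟩
  show IsCarlesonFamily _ dyadicSigma p (bumpFamily p N) _
  refine ⟨fun j => ?_, fun m => ?_, fun m A hA => ?_⟩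
  · exact ((measurable_const.indicator measurableSet_Ico).const_mul _).aestronglyMeasurable
  · exact Filter.Eventually.of_forall fun ξ =>
      memRad_of_eq_zero_off (Finset.Ico 0 N) fun j _ hj => bumpFamily_of_notMem hj ξ
  · exact setLIntegral_radMomentSet_bumpFamily_le (by linarith) N hA

end
end

section
/- Let E be a Banach space, 1 ≤ p < ∞, N a positive integer, and x_1,…,x_N ∈ E. Set y_j = 2^{j/p}x_j for j = 1,…,N and y_{N+1} = 0, define f : [0,1) → E by f = 0 on [0,2^{−N}) and f = 2y_j − y_{j+1} on [2^{−j},2^{−j+1}) for j = 1,…,N, and define θ_j = 2^{(N−j−1)/p} 1_{[0,2^{−N})} for 0 ≤ j ≤ N−1. Then ∫_0^1 𝔼‖∑_{j=0}^{N−1} ε_j θ_j(ξ) E_j f(ξ)‖^p dξ = 𝔼‖∑_{i=1}^N ε_i x_i‖^p. -/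
open MeasureTheory ENNReal Set
open scoped ZeroAtInfty

noncomputable section

/-! On `[0, 2^{-N})` the dyadic interval of length `2^{-j}` is `[0, 2^{-j})` for every `j < N`,
and the values `2y_k - y_{k+1}` of `f` on `[2^{-k}, 2^{-k+1})` are chosen so that its averages
telescope: `E_j f = y_{j+1}` there. Hence `θ_j E_j f = 2^{N/p} x_{j+1}` on `[0, 2^{-N})`, while
`θ = 0` off it, and the integrand is `2^N 𝔼‖∑ ε_i x_i‖^p` on a set of measure `2^{-N}`. -/

section RademacherMoment

variable {ι κ E : Type*} [NormedAddCommGroup E] [NormedSpace ℝ E] {p : ℝ}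

lemma radMoment_congr {x z : ι → E} {s : Finset ι} (h : ∀ j ∈ s, x j = z j) :
    radMoment p x s = radMoment p z s := by
  unfold radMoment
  congr 1
  refine Finset.sum_congr rfl fun ε _ => ?_
  congr 2
  exact Finset.sum_congr rfl fun j _ => by rw [h j.1 j.2]

lemma radMoment_eq_zero (hp : p ≠ 0) {x : ι → E} {s : Finset ι} (h : ∀ j ∈ s, x j = 0) :
    radMoment p x s = 0 := by
  rw [radMoment_congr h]
  simp [radMoment, Real.zero_rpow hp]

lemma radMoment_smul (c : ℝ) (x : ι → E) (s : Finset ι) :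
    radMoment p (fun j => c • x j) s = |c| ^ p * radMoment p x s := by
  simp only [radMoment, smul_comm _ c, ← Finset.smul_sum, norm_smul, Real.norm_eq_abs,
    Real.mul_rpow (abs_nonneg c) (norm_nonneg _)]
  rw [← Finset.mul_sum, mul_div_assoc]

lemma radMoment_comp_of_bijOn {g : ι → κ} {s : Finset ι} {t : Finset κ}
    (hg : Set.BijOn g s t) (z : κ → E) :
    radMoment p (z ∘ g) s = radMoment p z t := by
  classical
  let e : { a // a ∈ s } ≃ { b // b ∈ t } := hg.equiv g
  have hcard : s.card = t.card := by simpa using Fintype.card_congr e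
  unfold radMoment
  rw [hcard]
  congr 1
  refine Fintype.sum_equiv (e.arrowCongr (Equiv.refl Bool)) _ _ fun ε => ?_
  congr 2
  exact Fintype.sum_equiv e _ _ fun j => by simp [e, Equiv.arrowCongr]; rfl

end RademacherMoment

lemma sum_Icc_ite_zpow_smul_eq_sub {E : Type*} [AddCommGroup E] [Module ℝ E] (y : ℕ → E)
    {m N : ℕ} (h : m ≤ N) :
    ∑ k ∈ Finset.Icc 1 N,
        (if m < k then (2 : ℝ) ^ (-(k : ℤ)) • ((2 : ℝ) • y k - y (k + 1)) else 0) =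
      (2 : ℝ) ^ (-(m : ℤ)) • y (m + 1) - (2 : ℝ) ^ (-(N : ℤ)) • y (N + 1) := by
  induction N, h using Nat.le_induction with
  | base =>
    rw [sub_self]
    exact Finset.sum_eq_zero fun k hk => if_neg (by simp only [Finset.mem_Icc] at hk; omega)
  | succ N hmN ih =>
    have hpow : (2 : ℝ) ^ (-((N + 1 : ℕ) : ℤ)) = 2 ^ (-(N : ℤ)) / 2 := by
      rw [Nat.cast_succ, neg_add, zpow_add₀ two_ne_zero, zpow_neg_one, div_eq_mul_inv]
    rw [Finset.sum_Icc_succ_top (by omega), ih, if_pos (by omega), hpow]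
    module

section TestFunction

variable {E : Type*} [NormedAddCommGroup E] [NormedSpace ℝ E]

lemma dyadicAvg_of_mem_Ico_zero (f : ℝ → E) {j : ℤ} {ξ : ℝ} (hξ : ξ ∈ Ico 0 ((2 : ℝ) ^ (-j))) :
    dyadicAvg f j ξ = (2 : ℝ) ^ j • ∫ t in Ico 0 ((2 : ℝ) ^ (-j)), f t := by
  have h2j : (0 : ℝ) < 2 ^ j := zpow_pos two_pos j
  have hfloor : ⌊ξ * 2 ^ j⌋ = 0 := by
    rw [zpow_neg, inv_eq_one_div, mem_Ico, lt_div_iff₀ h2j] at hξ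
    exact Int.floor_eq_zero_iff.mpr ⟨mul_nonneg hξ.1 h2j.le, hξ.2⟩
  rw [dyadicAvg, hfloor, Int.cast_zero, zero_div, zero_add, one_div, ← zpow_neg]

def dyadicTestFun (N : ℕ) (y : ℕ → E) (ξ : ℝ) : E :=
  ∑ k ∈ Finset.Icc 1 N,
    (Ico ((2 : ℝ) ^ (-(k : ℤ))) ((2 : ℝ) ^ (-(k : ℤ) + 1))).indicator
      (fun _ => (2 : ℝ) • y k - y (k + 1)) ξ

variable [CompleteSpace E]

lemma setIntegral_Ico_zero_indicator_Ico (m k : ℕ) (v : E) :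
    ∫ t in Ico 0 ((2 : ℝ) ^ (-(m : ℤ))),
        (Ico ((2 : ℝ) ^ (-(k : ℤ))) ((2 : ℝ) ^ (-(k : ℤ) + 1))).indicator (fun _ => v) t =
      if m < k then (2 : ℝ) ^ (-(k : ℤ)) • v else 0 := by
  rw [integral_indicator_const v measurableSet_Ico, measureReal_restrict_apply measurableSet_Ico]
  split_ifs with hmk
  · have hsub : Ico ((2 : ℝ) ^ (-(k : ℤ))) (2 ^ (-(k : ℤ) + 1)) ⊆ Ico 0 (2 ^ (-(m : ℤ))) :=
      Ico_subset_Ico (by positivity) (zpow_le_zpow_right₀ one_le_two (by omega))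
    rw [inter_eq_left.mpr hsub, Real.volume_real_Ico, zpow_add_one₀ two_ne_zero]
    congr 1
    rw [max_eq_left] <;> linarith [zpow_pos (two_pos : (0 : ℝ) < 2) (-(k : ℤ))]
  · have hdisj : Disjoint (Ico ((2 : ℝ) ^ (-(k : ℤ))) (2 ^ (-(k : ℤ) + 1)))
        (Ico 0 (2 ^ (-(m : ℤ)))) := Ico_disjoint_Ico.mpr <| (min_le_right _ _).trans <|
      (zpow_le_zpow_right₀ one_le_two (by omega)).trans (le_max_left _ _)
    rw [hdisj.inter_eq, measureReal_empty, zero_smul]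

lemma setIntegral_Ico_zero_dyadicTestFun (y : ℕ → E) {m N : ℕ} (h : m ≤ N) :
    ∫ t in Ico 0 ((2 : ℝ) ^ (-(m : ℤ))), dyadicTestFun N y t =
      (2 : ℝ) ^ (-(m : ℤ)) • y (m + 1) - (2 : ℝ) ^ (-(N : ℤ)) • y (N + 1) := by
  unfold dyadicTestFun
  rw [← sum_Icc_ite_zpow_smul_eq_sub y h, integral_finsetSum _ fun k _ => by
    exact (integrableOn_const measure_Ico_lt_top.ne).indicator measurableSet_Ico]
  exact Finset.sum_congr rfl fun k _ => setIntegral_Ico_zero_indicator_Ico m k _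

lemma dyadicAvg_dyadicTestFun {N : ℕ} {y : ℕ → E} (hy : y (N + 1) = 0) {m : ℕ} (hm : m < N)
    {ξ : ℝ} (hξ : ξ ∈ Ico 0 (((2 : ℝ) ^ N)⁻¹)) :
    dyadicAvg (dyadicTestFun N y) m ξ = y (m + 1) := by
  have hξm : ξ ∈ Ico 0 ((2 : ℝ) ^ (-(m : ℤ))) := by
    refine ⟨hξ.1, hξ.2.trans_le ?_⟩
    rw [← zpow_natCast, ← zpow_neg]
    exact zpow_le_zpow_right₀ one_le_two (by omega)
  rw [dyadicAvg_of_mem_Ico_zero _ hξm, setIntegral_Ico_zero_dyadicTestFun y hm.le, hy, smul_zero,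
    sub_zero, smul_smul, ← zpow_add₀ two_ne_zero, add_neg_cancel, zpow_zero, one_smul]

end TestFunction

lemma setIntegral_Ico_zero_one_indicator_Ico_inv_pow (N : ℕ) (c : ℝ) :
    ∫ ξ in Ico (0 : ℝ) 1, (Ico (0 : ℝ) ((2 ^ N)⁻¹)).indicator (fun _ => c) ξ = (2 ^ N)⁻¹ * c := by
  have hsub : Ico (0 : ℝ) ((2 ^ N)⁻¹) ⊆ Ico 0 1 :=
    Ico_subset_Ico_right (inv_le_one_of_one_le₀ (one_le_pow₀ one_le_two))
  rw [setIntegral_indicator measurableSet_Ico, inter_eq_right.mpr hsub, setIntegral_const,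
    Real.volume_real_Ico, sub_zero, max_eq_left (by positivity), smul_eq_mul]

lemma bijOn_toNat_add_one_Icc (N : ℕ) :
    Set.BijOn (fun j : ℤ => j.toNat + 1) (Finset.Icc 0 ((N : ℤ) - 1)) (Finset.Icc 1 N) := by
  refine ⟨fun j hj => ?_, fun i hi j hj hij => ?_, fun k hk => ⟨(k : ℤ) - 1, ?_, ?_⟩⟩ <;>
    simp only [Finset.coe_Icc, mem_Icc] at * <;> omega

theorem stmt11_general {E : Type*} [NormedAddCommGroup E] [NormedSpace ℝ E] [CompleteSpace E]
    (p : ℝ) (hp : 1 ≤ p) (N : ℕ) (x : ℕ → E)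
    (y : ℕ → E)
    (hy : y = fun j => if 1 ≤ j ∧ j ≤ N then (2 : ℝ) ^ ((j : ℝ) / p) • x j else 0)
    (f : ℝ → E)
    (hf : f = fun ξ => ∑ j ∈ Finset.Icc 1 N,
      Set.indicator (Set.Ico ((2 : ℝ) ^ (-(j : ℤ))) ((2 : ℝ) ^ (-(j : ℤ) + 1)))
        (fun _ => (2 : ℝ) • y j - y (j + 1)) ξ)
    (θ : ℤ → ℝ → ℝ)
    (hθ : θ = fun (j : ℤ) (ξ : ℝ) =>
      (if 0 ≤ j ∧ j < (N : ℤ) then (2 : ℝ) ^ (((N : ℝ) - (j : ℝ) - 1) / p) else 0) *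
        Set.indicator (Set.Ico (0 : ℝ) (((2 : ℝ) ^ N)⁻¹)) (fun _ => (1 : ℝ)) ξ) :
    (∫ ξ in Set.Ico (0 : ℝ) 1,
        radMoment p (fun j : ℤ => θ j ξ • dyadicAvg f j ξ) (Finset.Icc 0 ((N : ℤ) - 1))) =
      radMoment p x (Finset.Icc 1 N) := by
  have hp0 : p ≠ 0 := (zero_lt_one.trans_le hp).ne'
  obtain rfl : f = dyadicTestFun N y := hf
  have hyN : y (N + 1) = 0 := by simp [hy]
  have hterm : ∀ ξ ∈ Ico (0 : ℝ) ((2 ^ N)⁻¹), ∀ j ∈ Finset.Icc 0 ((N : ℤ) - 1),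
      θ j ξ • dyadicAvg (dyadicTestFun N y) j ξ = (2 : ℝ) ^ ((N : ℝ) / p) • x (j.toNat + 1) := by
    intro ξ hξ j hj
    rw [Finset.mem_Icc] at hj
    obtain ⟨m, rfl, hm⟩ : ∃ m : ℕ, j = m ∧ m < N := ⟨j.toNat, by omega, by omega⟩
    rw [dyadicAvg_dyadicTestFun hyN hm hξ, hθ, hy]
    simp only [indicator_of_mem hξ, mul_one, Nat.cast_nonneg, Nat.cast_lt, hm, and_self, if_true]
    rw [if_pos (by omega), smul_smul, ← Real.rpow_add two_pos, Int.toNat_natCast]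
    congr 2
    push_cast
    ring
  have hmoment : ∀ ξ, radMoment p (fun j : ℤ => θ j ξ • dyadicAvg (dyadicTestFun N y) j ξ)
      (Finset.Icc 0 ((N : ℤ) - 1)) =
      (Ico (0 : ℝ) ((2 ^ N)⁻¹)).indicator (fun _ => 2 ^ N * radMoment p x (Finset.Icc 1 N)) ξ := by
    intro ξ
    by_cases hξ : ξ ∈ Ico (0 : ℝ) ((2 ^ N)⁻¹)
    · rw [indicator_of_mem hξ, radMoment_congr (hterm ξ hξ), radMoment_smul,
        ← radMoment_comp_of_bijOn (bijOn_toNat_add_one_Icc N) x, abs_of_pos (by positivity),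
        ← Real.rpow_mul zero_le_two, div_mul_cancel₀ _ hp0, Real.rpow_natCast]
      rfl
    · rw [indicator_of_notMem hξ]
      exact radMoment_eq_zero hp0 fun j _ => by simp [hθ, hξ]
  rw [setIntegral_congr_fun measurableSet_Ico fun ξ _ => hmoment ξ,
    setIntegral_Ico_zero_one_indicator_Ico_inv_pow, inv_mul_cancel_left₀ (by positivity)]

/-- with `y_j = 2^{j/p} x_j`, the test function `f` and the Carleson family
`θ` reproduce the Rademacher moment of `x_1, …, x_N`:
`∫_0^1 𝔼‖∑_{j=0}^{N-1} ε_j θ_j(ξ) E_j f(ξ)‖^p dξ = 𝔼‖∑_{i=1}^N ε_i x_i‖^p`. -/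
theorem stmt11 {E : Type*} [NormedAddCommGroup E] [NormedSpace ℝ E] [CompleteSpace E]
    (p : ℝ) (hp : 1 ≤ p) (N : ℕ) (hN : 0 < N) (x : ℕ → E)
    (y : ℕ → E)
    (hy : y = fun j => if 1 ≤ j ∧ j ≤ N then (2 : ℝ) ^ ((j : ℝ) / p) • x j else 0)
    (f : ℝ → E)
    (hf : f = fun ξ => ∑ j ∈ Finset.Icc 1 N,
      Set.indicator (Set.Ico ((2 : ℝ) ^ (-(j : ℤ))) ((2 : ℝ) ^ (-(j : ℤ) + 1)))
        (fun _ => (2 : ℝ) • y j - y (j + 1)) ξ)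
    (θ : ℤ → ℝ → ℝ)
    (hθ : θ = fun (j : ℤ) (ξ : ℝ) =>
      (if 0 ≤ j ∧ j < (N : ℤ) then (2 : ℝ) ^ (((N : ℝ) - (j : ℝ) - 1) / p) else 0) *
        Set.indicator (Set.Ico (0 : ℝ) (((2 : ℝ) ^ N)⁻¹)) (fun _ => (1 : ℝ)) ξ) :
    (∫ ξ in Set.Ico (0 : ℝ) 1,
        radMoment p (fun j : ℤ => θ j ξ • dyadicAvg f j ξ) (Finset.Icc 0 ((N : ℤ) - 1))) =
      radMoment p x (Finset.Icc 1 N) :=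
  stmt11_general p hp N x y hy f hf θ hθ

end
end
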